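/- Let Γ be the random bipartite graph. Then Aut(Γ)* = S_{l}(Γ) ∩ S_{r}(Γ); moreover any switch ρ with respect to the whole side R_l belongs to both S_{l}(Γ) and S_{r}(Γ). -/

import Mathlib

/-! Preamble: bipartite graphs, the random bipartite graph, side-preserving
permutation groups, switches, switch groups, and related notions. -/

/-- A bipartite graph on a vertex type `V`: the sides `left` and `right`
partition `V`, both sides are nonempty, and `adj` (the relation `P₁`) only holds
from `left` to `right`.  The relation `P₂` is the complement of `adj` on
`left × right`. -/
structure BipartiteGraph (V : Type*) where
  left : Set V
  right : Set V
  adj : V → V → Prop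
  left_nonempty : left.Nonempty
  right_nonempty : right.Nonempty
  union_eq : left ∪ right = Set.univ
  disjoint_sides : Disjoint left right
  adj_dom : ∀ a b, adj a b → a ∈ left ∧ b ∈ right

/-- The two sides of a bipartite graph. -/
inductive BSide : Type
  | l : BSide
  | r : BSide
deriving DecidableEq

namespace BipartiteGraph

variable {V : Type*} (Γ : BipartiteGraph V)

/-- The side of the graph indexed by an element of `BSide`. -/
def side : BSide → Set V
  | BSide.l => Γ.left
  | BSide.r => Γ.right

/-- `Γ` is (isomorphic to) the random bipartite graph: it is countable, both
sides are infinite, and it satisfies the extension properties `Θₙ` for all `n`. -/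
structure IsRandom : Prop where
  countable : Countable V
  left_infinite : Γ.left.Infinite
  right_infinite : Γ.right.Infinite
  ext_left : ∀ X₁ X₂ : Finset V, ↑X₁ ⊆ Γ.left → ↑X₂ ⊆ Γ.left → Disjoint X₁ X₂ →
      ∃ v ∈ Γ.right, (∀ x ∈ X₁, Γ.adj x v) ∧ (∀ x ∈ X₂, ¬ Γ.adj x v)
  ext_right : ∀ X₁ X₂ : Finset V, ↑X₁ ⊆ Γ.right → ↑X₂ ⊆ Γ.right → Disjoint X₁ X₂ →
      ∃ v ∈ Γ.left, (∀ x ∈ X₁, Γ.adj v x) ∧ (∀ x ∈ X₂, ¬ Γ.adj v x)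

/-- `Sym_{l,r}(Γ)`: the group of permutations of `V` preserving both sides. -/
def symLR : Subgroup (Equiv.Perm V) where
  carrier := {g | (∀ v, g v ∈ Γ.left ↔ v ∈ Γ.left) ∧ (∀ v, g v ∈ Γ.right ↔ v ∈ Γ.right)}
  one_mem' := ⟨fun _ => Iff.rfl, fun _ => Iff.rfl⟩
  mul_mem' := by
    rintro a b ⟨hal, har⟩ ⟨hbl, hbr⟩
    exact ⟨fun v => (hal (b v)).trans (hbl v), fun v => (har (b v)).trans (hbr v)⟩
  inv_mem' := by
    rintro a ⟨hal, har⟩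
    refine ⟨fun v => ?_, fun v => ?_⟩
    · have h := hal (a⁻¹ v); rw [Equiv.Perm.coe_inv, Equiv.apply_symm_apply] at h; exact h.symm
    · have h := har (a⁻¹ v); rw [Equiv.Perm.coe_inv, Equiv.apply_symm_apply] at h; exact h.symm

/-- The automorphism group of `Γ`: side-preserving permutations preserving `adj`
(and hence both cross-types). -/
def autGroup : Subgroup (Equiv.Perm V) where
  carrier := {g | g ∈ Γ.symLR ∧ ∀ a b, Γ.adj a b ↔ Γ.adj (g a) (g b)}
  one_mem' := ⟨Γ.symLR.one_mem, fun _ _ => Iff.rfl⟩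
  mul_mem' := by
    rintro a b ⟨ha, ha2⟩ ⟨hb, hb2⟩
    exact ⟨mul_mem ha hb, fun x y => (hb2 x y).trans (ha2 (b x) (b y))⟩
  inv_mem' := by
    rintro a ⟨ha, ha2⟩
    refine ⟨inv_mem ha, fun x y => ?_⟩
    have h := ha2 (a⁻¹ x) (a⁻¹ y)
    rw [Equiv.Perm.coe_inv, Equiv.apply_symm_apply, Equiv.apply_symm_apply] at h
    exact h.symm

/-- A permutation `g` is a switch with respect to a set `A` if it preserves the
sides and, for every cross-edge `(a, b)`, the cross-type of `(a, b)` is preserved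
if and only if `|{a, b} ∩ A| ≠ 1`. -/
def IsSwitch (g : Equiv.Perm V) (A : Set V) : Prop :=
  g ∈ Γ.symLR ∧ ∀ a ∈ Γ.left, ∀ b ∈ Γ.right,
    ((Γ.adj a b ↔ Γ.adj (g a) (g b)) ↔ ({a, b} ∩ A : Set V).ncard ≠ 1)

/-- The restriction of a map `g` to a set `S` is a switch with respect to `A`:
the condition of `IsSwitch` holds for all cross-edges inside `S`. -/
def IsSwitchOn (g : V → V) (S : Set V) (A : Set V) : Prop :=
  ∀ a ∈ S ∩ Γ.left, ∀ b ∈ S ∩ Γ.right,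
    ((Γ.adj a b ↔ Γ.adj (g a) (g b)) ↔ ({a, b} ∩ A : Set V).ncard ≠ 1)

/-- The restriction of a map `g` to a set `S` is an isomorphism: `g` preserves
the cross-type of every cross-edge inside `S`. -/
def IsIsoOn (g : V → V) (S : Set V) : Prop :=
  ∀ a ∈ S ∩ Γ.left, ∀ b ∈ S ∩ Γ.right, (Γ.adj a b ↔ Γ.adj (g a) (g b))

end BipartiteGraph

/-- A subgroup of the full symmetric group is closed (in the topology of
pointwise convergence) iff it contains every permutation which agrees with some
member of the subgroup on each finite subset. -/
def IsClosedSubgroup {V : Type*} (G : Subgroup (Equiv.Perm V)) : Prop :=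
  ∀ g : Equiv.Perm V, (∀ F : Finset V, ∃ h ∈ G, ∀ x ∈ F, h x = g x) → g ∈ G

/-- The closed subgroup generated by a set of permutations: the intersection of
all closed subgroups containing the set. -/
def closedClosure {V : Type*} (S : Set (Equiv.Perm V)) : Subgroup (Equiv.Perm V) :=
  sInf {G : Subgroup (Equiv.Perm V) | IsClosedSubgroup G ∧ S ⊆ ↑G}

namespace BipartiteGraph

variable {V : Type*} (Γ : BipartiteGraph V)

/-- The switch group `S_X(Γ)`: the closed subgroup of `Sym_{l,r}(Γ)` generated
by `Aut(Γ)` together with all switches with respect to a single vertex `v ∈ R_i`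
for `i ∈ X`. -/
def switchGroup (X : Set BSide) : Subgroup (Equiv.Perm V) :=
  closedClosure ((Γ.autGroup : Set (Equiv.Perm V)) ∪
    {g | ∃ i ∈ X, ∃ v ∈ Γ.side i, Γ.IsSwitch g {v}})

/-- The group `S_X(Γ)* `: the closed subgroup generated by `S_X(Γ)` together with
a switch `ρ` with respect to the whole side `R_l`. -/
def switchGroupStar (X : Set BSide) : Subgroup (Equiv.Perm V) :=
  closedClosure ((Γ.switchGroup X : Set (Equiv.Perm V)) ∪ {g | Γ.IsSwitch g Γ.left})

/-- Membership in `Aut(Γ)*`, the group of side-preserving permutations which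
either preserve all cross-types on `R_l × R_r` or exchange all cross-types on
`R_l × R_r`. -/
def InAutStar (g : Equiv.Perm V) : Prop :=
  g ∈ Γ.symLR ∧
    ((∀ a ∈ Γ.left, ∀ b ∈ Γ.right, (Γ.adj a b ↔ Γ.adj (g a) (g b))) ∨
     (∀ a ∈ Γ.left, ∀ b ∈ Γ.right, (Γ.adj a b ↔ ¬ Γ.adj (g a) (g b))))

/-- The number of cross-edges of cross-type `P₁` inside the set `S`. -/
noncomputable def edgeCount (S : Set V) : ℕ :=
  {p : V × V | p.1 ∈ S ∧ p.2 ∈ S ∧ Γ.adj p.1 p.2}.ncard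

/-- `g` preserves the parity of cross-types on `S`: the number of `P₁`
cross-edges in `S` is even iff the number of `P₁` cross-edges in `g[S]` is even. -/
def PreservesParityOn (g : V → V) (S : Set V) : Prop :=
  Even (Γ.edgeCount S) ↔ Even (Γ.edgeCount (g '' S))

/-- An `(m × n)`-subgraph of `Γ`: a finite set of vertices with `m` vertices on
the left side and `n` vertices on the right side. -/
def IsMNSubgraph (S : Set V) (m n : ℕ) : Prop :=
  S.Finite ∧ (S ∩ Γ.left).ncard = m ∧ (S ∩ Γ.right).ncard = n

end BipartiteGraph

/-! A switch with respect to a finite set `A` is a side-preserving isomorphism from `Γ` switched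
at `A` onto `Γ`, and the switched graph is again random; so back and forth yields switches with
respect to `A` extending any finite partial switch. Peeling off one vertex of `A ⊆ R_i` at a time
writes such a switch as a product of single-vertex switches and an automorphism, so it lies in
`S_i(Γ)`. A switch `ρ` with respect to `R_l` agrees on each finite `F` with a switch with respect
to `F ∩ R_i`, hence lies in the closed group `S_i(Γ)`.

Conversely, for the generators of `S_i(Γ)` whether the cross-type of `(a, b)` is kept depends only
on the endpoint of `(a, b)` in `R_i`, and this property defines a closed subgroup. A permutation in
`S_l(Γ) ∩ S_r(Γ)` therefore keeps either all cross-types or none. -/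

theorem isClosedSubgroup_closedClosure {V : Type*} (S : Set (Equiv.Perm V)) :
    IsClosedSubgroup (closedClosure S) := fun g hg =>
  Subgroup.mem_sInf.2 fun G hG => hG.1 g fun F =>
    let ⟨h, hh, hF⟩ := hg F
    ⟨h, Subgroup.mem_sInf.1 hh G hG, hF⟩

theorem subset_closedClosure {V : Type*} (S : Set (Equiv.Perm V)) : S ⊆ closedClosure S :=
  fun _ hg => Subgroup.mem_sInf.2 fun _ hG => hG.2 hg

theorem closedClosure_le {V : Type*} {S : Set (Equiv.Perm V)} {G : Subgroup (Equiv.Perm V)}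
    (hG : IsClosedSubgroup G) (hS : S ⊆ G) : closedClosure S ≤ G :=
  sInf_le ⟨hG, hS⟩

theorem ncard_pair_inter_eq_one_iff {α : Type*} {x y : α} {A : Set α} (hy : y ∉ A) :
    (({x, y} : Set α) ∩ A).ncard = 1 ↔ x ∈ A := by
  by_cases hx : x ∈ A
  · simp [Set.insert_inter_of_mem hx, Set.singleton_inter_eq_empty.2 hy, hx]
  · simp [Set.insert_inter_of_notMem hx, Set.singleton_inter_eq_empty.2 hy, hx]

theorem exists_perm_of_forth_back {V : Type*} [Countable V] [DecidableEq V]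
    {P : Finset (V × V) → Prop}
    (hbij : ∀ p, P p → ∀ q ∈ p, ∀ q' ∈ p, q.1 = q'.1 ↔ q.2 = q'.2)
    (forth : ∀ p, P p → ∀ x, ∃ y, P (insert (x, y) p))
    (back : ∀ p, P p → ∀ y, ∃ x, P (insert (x, y) p)) {p₀ : Finset (V × V)} (h₀ : P p₀) :
    ∃ g : Equiv.Perm V, ∀ x x', ∃ p, P p ∧ p₀ ⊆ p ∧ (x, g x) ∈ p ∧ (x', g x') ∈ p := by
  have := Encodable.ofCountable V
  let cofinal : V ⊕ V → Order.Cofinal {p // P p}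
    | .inl x => ⟨{p | ∃ y, (x, y) ∈ p.1}, fun p =>
        let ⟨y, hy⟩ := forth p.1 p.2 x
        ⟨⟨_, hy⟩, ⟨y, Finset.mem_insert_self _ _⟩, Finset.subset_insert _ _⟩⟩
    | .inr y => ⟨{p | ∃ x, (x, y) ∈ p.1}, fun p =>
        let ⟨x, hx⟩ := back p.1 p.2 y
        ⟨⟨_, hx⟩, ⟨x, Finset.mem_insert_self _ _⟩, Finset.subset_insert _ _⟩⟩
  let s := Order.sequenceOfCofinals ⟨p₀, h₀⟩ cofinal
  have hmono {m n : ℕ} (h : m ≤ n) : (s m).1 ⊆ (s n).1 :=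
    Order.sequenceOfCofinals.monotone _ cofinal h
  let N (z : V ⊕ V) := Encodable.encode z + 1
  have hdom (x : V) : ∃ y, (x, y) ∈ (s (N (.inl x))).1 :=
    Order.sequenceOfCofinals.encode_mem _ cofinal (.inl x)
  have hcod (y : V) : ∃ x, (x, y) ∈ (s (N (.inr y))).1 :=
    Order.sequenceOfCofinals.encode_mem _ cofinal (.inr y)
  choose f hf using hdom
  have hbij' {x y x' y' : V} {m n : ℕ} (h : (x, y) ∈ (s m).1) (h' : (x', y') ∈ (s n).1) :
      x = x' ↔ y = y' :=
    hbij _ (s (max m n)).2 _ (hmono (le_max_left m n) h) _ (hmono (le_max_right m n) h')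
  have hinj : Function.Injective f := fun x x' hxx' => (hbij' (hf x) (hf x')).2 hxx'
  have hsurj : Function.Surjective f := fun y =>
    let ⟨x, hx⟩ := hcod y
    ⟨x, (hbij' (hf x) hx).1 rfl⟩
  refine ⟨Equiv.ofBijective f ⟨hinj, hsurj⟩, fun x x' =>
    ⟨_, (s (max (N (.inl x)) (N (.inl x')))).2, hmono (Nat.zero_le _),
      hmono (le_max_left _ _) (hf x), hmono (le_max_right _ _) (hf x')⟩⟩

def BSide.endpoint {V : Type*} : BSide → V → V → V
  | .l, a, _ => a
  | .r, _, b => b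

theorem BSide.endpoint_apply {V : Type*} (i : BSide) (f : V → V) (a b : V) :
    i.endpoint (f a) (f b) = f (i.endpoint a b) := by
  cases i <;> rfl

namespace BipartiteGraph

open Equiv

variable {V : Type*}

section Basic

variable (Γ : BipartiteGraph V)

theorem mem_right_iff_notMem_left {v : V} : v ∈ Γ.right ↔ v ∉ Γ.left := by
  rw [← Set.mem_compl_iff, ← IsCompl.compl_eq ⟨Γ.disjoint_sides, codisjoint_iff.2 Γ.union_eq⟩]

theorem endpoint_mem_side (i : BSide) {a b : V} (ha : a ∈ Γ.left) (hb : b ∈ Γ.right) :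
    i.endpoint a b ∈ Γ.side i := by
  cases i
  exacts [ha, hb]

theorem ncard_cross_pair_inter_eq_one_iff {i : BSide} {A : Set V} (hA : A ⊆ Γ.side i)
    {a b : V} (ha : a ∈ Γ.left) (hb : b ∈ Γ.right) :
    (({a, b} : Set V) ∩ A).ncard = 1 ↔ i.endpoint a b ∈ A := by
  cases i
  · exact ncard_pair_inter_eq_one_iff fun h => Γ.mem_right_iff_notMem_left.1 hb (hA h)
  · rw [Set.pair_comm]
    exact ncard_pair_inter_eq_one_iff fun h => Γ.mem_right_iff_notMem_left.1 (hA h) ha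

variable {Γ} in
theorem mem_symLR_of_left {g : Perm V} (hg : ∀ v, v ∈ Γ.left ↔ g v ∈ Γ.left) :
    g ∈ Γ.symLR :=
  ⟨fun v => (hg v).symm, fun v => by
    rw [Γ.mem_right_iff_notMem_left, Γ.mem_right_iff_notMem_left, hg v]⟩

theorem adj_iff_adj_of_cross {Γ₂ : BipartiteGraph V} {f : V → V}
    (hf : ∀ v, v ∈ Γ.left ↔ f v ∈ Γ₂.left) {a b : V}
    (h : a ∈ Γ.left → b ∈ Γ.right → (Γ.adj a b ↔ Γ₂.adj (f a) (f b))) :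
    Γ.adj a b ↔ Γ₂.adj (f a) (f b) := by
  by_cases hab : a ∈ Γ.left ∧ b ∈ Γ.right
  · exact h hab.1 hab.2
  refine iff_of_false (fun h => hab (Γ.adj_dom a b h)) fun h => hab ?_
  obtain ⟨ha, hb⟩ := Γ₂.adj_dom _ _ h
  rw [Γ₂.mem_right_iff_notMem_left, ← hf] at hb
  exact ⟨(hf a).2 ha, Γ.mem_right_iff_notMem_left.2 hb⟩

def KeepsType (g : Perm V) (a b : V) : Prop :=
  Γ.adj a b ↔ Γ.adj (g a) (g b)

variable {Γ}

theorem keepsType_mul {g h : Perm V} {a b : V} :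
    Γ.KeepsType (g * h) a b ↔ (Γ.KeepsType h a b ↔ Γ.KeepsType g (h a) (h b)) := by
  simp only [KeepsType, Perm.mul_apply]
  tauto

theorem keepsType_inv {g : Perm V} {a b : V} :
    Γ.KeepsType g⁻¹ a b ↔ Γ.KeepsType g (g⁻¹ a) (g⁻¹ b) := by
  simp only [KeepsType, Perm.coe_inv, apply_symm_apply]
  exact iff_comm

theorem keepsType_congr {g h : Perm V} {a b : V} (ha : g a = h a) (hb : g b = h b) :
    Γ.KeepsType g a b ↔ Γ.KeepsType h a b := by
  rw [KeepsType, KeepsType, ha, hb]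

theorem mem_autGroup_of_keepsType {g : Perm V} (hg : g ∈ Γ.symLR)
    (h : ∀ a ∈ Γ.left, ∀ b ∈ Γ.right, Γ.KeepsType g a b) : g ∈ Γ.autGroup :=
  ⟨hg, fun a b => Γ.adj_iff_adj_of_cross (fun v => (hg.1 v).symm) (h a · b ·)⟩

theorem isSwitch_iff_of_subset_side {i : BSide} {A : Set V} (hA : A ⊆ Γ.side i)
    {g : Perm V} : Γ.IsSwitch g A ↔
      g ∈ Γ.symLR ∧ ∀ a ∈ Γ.left, ∀ b ∈ Γ.right, (Γ.KeepsType g a b ↔ i.endpoint a b ∉ A) :=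
  and_congr_right fun _ => forall₂_congr fun _ ha => forall₂_congr fun _ hb => by
    rw [ne_eq, Γ.ncard_cross_pair_inter_eq_one_iff hA ha hb]
    rfl

theorem autGroup_le_switchGroup (X : Set BSide) : Γ.autGroup ≤ Γ.switchGroup X :=
  fun _ hg => subset_closedClosure _ (Or.inl hg)

theorem mem_switchGroup_of_isSwitch_singleton {i : BSide} {v : V} (hv : v ∈ Γ.side i)
    {g : Perm V} (hg : Γ.IsSwitch g {v}) : g ∈ Γ.switchGroup {i} :=
  subset_closedClosure _ (Or.inr ⟨i, rfl, v, hv, hg⟩)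

end Basic

section Switching

variable (Γ : BipartiteGraph V)

def flip : BipartiteGraph V where
  left := Γ.right
  right := Γ.left
  adj a b := Γ.adj b a
  left_nonempty := Γ.right_nonempty
  right_nonempty := Γ.left_nonempty
  union_eq := by rw [Set.union_comm, Γ.union_eq]
  disjoint_sides := Γ.disjoint_sides.symm
  adj_dom a b h := (Γ.adj_dom b a h).symm

/-- `Γ` switched with respect to `A`: the switches with respect to `A` are exactly the
side-preserving isomorphisms from it onto `Γ`. -/
def switched (A : Set V) : BipartiteGraph V where
  left := Γ.left
  right := Γ.right
  adj a b := a ∈ Γ.left ∧ b ∈ Γ.right ∧ (Γ.adj a b ↔ ({a, b} ∩ A : Set V).ncard ≠ 1)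
  left_nonempty := Γ.left_nonempty
  right_nonempty := Γ.right_nonempty
  union_eq := Γ.union_eq
  disjoint_sides := Γ.disjoint_sides
  adj_dom _ _ h := ⟨h.1, h.2.1⟩

theorem switched_adj_of_cross {A : Set V} {a b : V} (ha : a ∈ Γ.left) (hb : b ∈ Γ.right) :
    (Γ.switched A).adj a b ↔ (Γ.adj a b ↔ ({a, b} ∩ A : Set V).ncard ≠ 1) :=
  ⟨fun h => h.2.2, fun h => ⟨ha, hb, h⟩⟩

theorem flip_switched (A : Set V) : (Γ.switched A).flip = Γ.flip.switched A := by
  simp only [flip, switched, mk.injEq, true_and]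
  ext a b
  rw [Set.pair_comm]
  tauto

/-- The extension properties `Θₙ` for subsets of `R_l`, with a witness outside a given finite
set. -/
def HasLeftExtension : Prop :=
  ∀ X B : Finset V, ↑X ⊆ Γ.left → ∀ P : V → Prop,
    ∃ v ∈ Γ.right, v ∉ B ∧ ∀ x ∈ X, Γ.adj x v ↔ P x

variable {Γ}

theorem IsRandom.flip (hΓ : Γ.IsRandom) : Γ.flip.IsRandom :=
  ⟨hΓ.countable, hΓ.right_infinite, hΓ.left_infinite, hΓ.ext_right, hΓ.ext_left⟩

theorem IsRandom.hasLeftExtension (hΓ : Γ.IsRandom) : Γ.HasLeftExtension := by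
  classical
  intro X B hX P
  induction B using Finset.induction_on generalizing X P with
  | empty =>
    obtain ⟨v, hv, hpos, hneg⟩ := hΓ.ext_left (X.filter P) (X.filter (¬ P ·))
      (fun x hx => hX (Finset.mem_filter.1 hx).1) (fun x hx => hX (Finset.mem_filter.1 hx).1)
      (Finset.disjoint_filter_filter_not X X P)
    refine ⟨v, hv, Finset.notMem_empty v, fun x hx => ⟨fun h => ?_, fun h =>
      hpos x (Finset.mem_filter.2 ⟨hx, h⟩)⟩⟩
    by_contra hP
    exact hneg x (Finset.mem_filter.2 ⟨hx, hP⟩) h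
  | insert b B _ ih =>
    -- prescribing at a fresh vertex `w` the opposite of its adjacency to `b` forces `v ≠ b`
    obtain ⟨w, hw, hwX⟩ := hΓ.left_infinite.exists_notMem_finset X
    obtain ⟨v, hv, hvB, hvX⟩ := ih (insert w X) (by simpa [Set.insert_subset_iff] using ⟨hw, hX⟩)
      fun x => if x = w then ¬ Γ.adj w b else P x
    refine ⟨v, hv, ?_, fun x hx => ?_⟩
    · rw [Finset.mem_insert, not_or]
      refine ⟨?_, hvB⟩
      rintro rfl
      simpa using hvX w (Finset.mem_insert_self w X)
    · simpa [ne_of_mem_of_not_mem hx hwX] using hvX x (Finset.mem_insert_of_mem hx)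

theorem HasLeftExtension.ext_left (h : Γ.HasLeftExtension) (X₁ X₂ : Finset V)
    (h₁ : ↑X₁ ⊆ Γ.left) (h₂ : ↑X₂ ⊆ Γ.left) (hd : Disjoint X₁ X₂) :
    ∃ v ∈ Γ.right, (∀ x ∈ X₁, Γ.adj x v) ∧ ∀ x ∈ X₂, ¬ Γ.adj x v := by
  classical
  obtain ⟨v, hv, -, hX⟩ := h (X₁ ∪ X₂) ∅ (by simpa using ⟨h₁, h₂⟩) (· ∈ X₁)
  exact ⟨v, hv, fun x hx => (hX x (Finset.mem_union_left _ hx)).2 hx,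
    fun x hx => by rw [hX x (Finset.mem_union_right _ hx)]; exact Finset.disjoint_right.1 hd hx⟩

theorem HasLeftExtension.switched (h : Γ.HasLeftExtension) (A : Finset V) :
    (Γ.switched A).HasLeftExtension := by
  classical
  intro X B hX P
  -- for a witness outside `A`, switching flips its adjacency exactly to the vertices of `A`
  obtain ⟨v, hv, hvB, hvX⟩ := h X (B ∪ A) hX fun x => P x ↔ x ∉ A
  rw [Finset.mem_union, not_or] at hvB
  refine ⟨v, hv, hvB.1, fun x hx => ?_⟩
  have hA := ncard_pair_inter_eq_one_iff (x := x) (Finset.mem_coe.not.2 hvB.2)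
  rw [Γ.switched_adj_of_cross (hX hx) hv, ne_eq, hA, hvX x hx, Finset.mem_coe]
  tauto

theorem IsRandom.switched (hΓ : Γ.IsRandom) (A : Finset V) : (Γ.switched A).IsRandom where
  countable := hΓ.countable
  left_infinite := hΓ.left_infinite
  right_infinite := hΓ.right_infinite
  ext_left := (hΓ.hasLeftExtension.switched A).ext_left
  ext_right := by
    have h := hΓ.flip.hasLeftExtension.switched A
    rw [← flip_switched] at h
    exact h.ext_left

end Switching

section PartialIso

def IsPartialIso (Γ₁ Γ₂ : BipartiteGraph V) (p : Finset (V × V)) : Prop :=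
  ∀ q ∈ p, ∀ q' ∈ p, (q.1 ∈ Γ₁.left ↔ q.2 ∈ Γ₂.left) ∧ (q.1 = q'.1 ↔ q.2 = q'.2) ∧
    (Γ₁.adj q.1 q'.1 ↔ Γ₂.adj q.2 q'.2)

variable {Γ₁ Γ₂ : BipartiteGraph V} {p : Finset (V × V)}

theorem IsPartialIso.flip (hp : IsPartialIso Γ₁ Γ₂ p) : IsPartialIso Γ₁.flip Γ₂.flip p :=
  fun q hq q' hq' => ⟨by
    change q.1 ∈ Γ₁.right ↔ q.2 ∈ Γ₂.right
    rw [Γ₁.mem_right_iff_notMem_left, Γ₂.mem_right_iff_notMem_left, (hp q hq q hq).1],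
    (hp q hq q' hq').2.1, (hp q' hq' q hq).2.2⟩

section Extension

variable [DecidableEq V]

theorem IsPartialIso.symm (hp : IsPartialIso Γ₁ Γ₂ p) :
    IsPartialIso Γ₂ Γ₁ (p.image Prod.swap) := by
  simp only [IsPartialIso, Finset.forall_mem_image]
  intro q hq q' hq'
  obtain ⟨h₁, h₂, h₃⟩ := hp q hq q' hq'
  exact ⟨h₁.symm, h₂.symm, h₃.symm⟩

theorem IsPartialIso.exists_insert_of_mem_right (h₂ : Γ₂.HasLeftExtension)
    (hp : IsPartialIso Γ₁ Γ₂ p) {x : V} (hx : x ∈ Γ₁.right) :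
    ∃ y, IsPartialIso Γ₁ Γ₂ (insert (x, y) p) := by
  classical
  by_cases hxp : ∃ y, (x, y) ∈ p
  · obtain ⟨y, hy⟩ := hxp
    exact ⟨y, by rwa [Finset.insert_eq_of_mem hy]⟩
  simp only [not_exists] at hxp
  -- the image `y` must be adjacent to `q.2` exactly when `x` is adjacent to `q.1`
  obtain ⟨y, hy, hyp, hadj⟩ := h₂ ((p.filter (·.1 ∈ Γ₁.left)).image Prod.snd) (p.image Prod.snd)
    (by
      intro z hz
      obtain ⟨q, hq, rfl⟩ := Finset.mem_image.1 hz
      exact (hp q (Finset.mem_filter.1 hq).1 q (Finset.mem_filter.1 hq).1).1.1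
        (Finset.mem_filter.1 hq).2)
    fun z => ∃ q ∈ p, q.2 = z ∧ Γ₁.adj q.1 x
  have hxl : x ∉ Γ₁.left := Γ₁.mem_right_iff_notMem_left.1 hx
  have hyl : y ∉ Γ₂.left := Γ₂.mem_right_iff_notMem_left.1 hy
  have hne (q) (hq : q ∈ p) : x ≠ q.1 ∧ y ≠ q.2 :=
    ⟨fun h => hxp q.2 (by rwa [h]), fun h => hyp (by rw [h]; exact Finset.mem_image_of_mem _ hq)⟩
  have hadj' (q) (hq : q ∈ p) : Γ₁.adj q.1 x ↔ Γ₂.adj q.2 y := by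
    by_cases hq₁ : q.1 ∈ Γ₁.left
    · rw [hadj q.2 (Finset.mem_image_of_mem _ (Finset.mem_filter.2 ⟨hq, hq₁⟩))]
      refine ⟨fun h => ⟨q, hq, rfl, h⟩, ?_⟩
      rintro ⟨q', hq', he, h⟩
      rwa [← (hp q' hq' q hq).2.1.2 he]
    · exact iff_of_false (fun h => hq₁ (Γ₁.adj_dom _ _ h).1)
        fun h => hq₁ ((hp q hq q hq).1.2 (Γ₂.adj_dom _ _ h).1)
  have hnadj (z z' : V) : ¬ Γ₁.adj x z ∧ ¬ Γ₂.adj y z' :=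
    ⟨fun h => hxl (Γ₁.adj_dom _ _ h).1, fun h => hyl (Γ₂.adj_dom _ _ h).1⟩
  refine ⟨y, ?_⟩
  unfold IsPartialIso
  simp only [Finset.forall_mem_insert]
  refine ⟨⟨⟨iff_of_false hxl hyl, by simp, iff_of_false (hnadj x y).1 (hnadj x y).2⟩,
      fun q hq => ⟨iff_of_false hxl hyl, iff_of_false (hne q hq).1 (hne q hq).2,
        iff_of_false (hnadj q.1 q.2).1 (hnadj q.1 q.2).2⟩⟩,
    fun q hq => ⟨⟨(hp q hq q hq).1, iff_of_false (hne q hq).1.symm (hne q hq).2.symm,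
      hadj' q hq⟩, hp q hq⟩⟩

theorem IsPartialIso.exists_insert (h₂ : Γ₂.IsRandom) (hp : IsPartialIso Γ₁ Γ₂ p) (x : V) :
    ∃ y, IsPartialIso Γ₁ Γ₂ (insert (x, y) p) := by
  by_cases hx : x ∈ Γ₁.left
  · exact (hp.flip.exists_insert_of_mem_right h₂.flip.hasLeftExtension hx).imp fun _ h => h.flip
  · exact hp.exists_insert_of_mem_right h₂.hasLeftExtension (Γ₁.mem_right_iff_notMem_left.2 hx)

theorem IsPartialIso.exists_insert' (h₁ : Γ₁.IsRandom) (hp : IsPartialIso Γ₁ Γ₂ p) (y : V) :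
    ∃ x, IsPartialIso Γ₁ Γ₂ (insert (x, y) p) := by
  obtain ⟨x, hx⟩ := hp.symm.exists_insert h₁ y
  refine ⟨x, ?_⟩
  simpa [Finset.image_insert, Finset.image_image, Prod.swap_swap_eq] using hx.symm

end Extension

theorem IsPartialIso.exists_iso_extension (h₁ : Γ₁.IsRandom) (h₂ : Γ₂.IsRandom)
    (hp : IsPartialIso Γ₁ Γ₂ p) :
    ∃ g : Perm V, (∀ v, v ∈ Γ₁.left ↔ g v ∈ Γ₂.left) ∧
      (∀ a b, Γ₁.adj a b ↔ Γ₂.adj (g a) (g b)) ∧ ∀ q ∈ p, g q.1 = q.2 := by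
  classical
  have := h₁.countable
  obtain ⟨g, hg⟩ := exists_perm_of_forth_back (fun p hp q hq q' hq' => (hp q hq q' hq').2.1)
    (fun _ hp => hp.exists_insert h₂) (fun _ hp => hp.exists_insert' h₁) hp
  refine ⟨g, fun v => ?_, fun a b => ?_, fun q hq => ?_⟩
  · obtain ⟨p, hp, -, hv, -⟩ := hg v v
    exact (hp _ hv _ hv).1
  · obtain ⟨p, hp, -, ha, hb⟩ := hg a b
    exact (hp _ ha _ hb).2.2
  · obtain ⟨p', hp', hpp', hq₁, -⟩ := hg q.1 q.1
    exact (hp' _ hq₁ _ (hpp' hq)).2.1.1 rfl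

end PartialIso

section Switches

variable {Γ : BipartiteGraph V}

theorem isPartialIso_switched_of_isSwitchOn [DecidableEq V] {g : Perm V} (hg : g ∈ Γ.symLR)
    {F : Finset V} {A : Set V} (h : Γ.IsSwitchOn g ↑F A) :
    IsPartialIso (Γ.switched A) Γ (F.image fun x => (x, g x)) := by
  simp only [IsPartialIso, Finset.forall_mem_image]
  intro a ha b hb
  refine ⟨(hg.1 a).symm, g.injective.eq_iff.symm,
    (Γ.switched A).adj_iff_adj_of_cross (fun v => (hg.1 v).symm) fun hal hbr => ?_⟩
  rw [Γ.switched_adj_of_cross hal hbr]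
  have := h a ⟨ha, hal⟩ b ⟨hb, hbr⟩
  tauto

theorem IsRandom.exists_isSwitch_extending (hΓ : Γ.IsRandom) (A F : Finset V) {g : Perm V}
    (hg : g ∈ Γ.symLR) (hgF : Γ.IsSwitchOn g ↑F ↑A) :
    ∃ s, Γ.IsSwitch s ↑A ∧ ∀ x ∈ F, s x = g x := by
  classical
  obtain ⟨s, hside, hadj, hs⟩ :=
    (isPartialIso_switched_of_isSwitchOn hg hgF).exists_iso_extension (hΓ.switched A) hΓ
  refine ⟨s, ⟨mem_symLR_of_left hside, fun a ha b hb => ?_⟩,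
    fun x hx => hs _ (Finset.mem_image_of_mem _ hx)⟩
  have := hadj a b
  rw [Γ.switched_adj_of_cross ha hb] at this
  tauto

theorem isSwitchOn_singleton (g : Perm V) (v : V) (A : Set V) : Γ.IsSwitchOn g {v} A := by
  rintro a ⟨rfl, ha⟩ b ⟨rfl, hb⟩
  exact absurd ha (Γ.mem_right_iff_notMem_left.1 hb)

theorem isSwitch_inv_mul {i : BSide} {s t : Perm V} {v : V} {A : Set V}
    (hA : insert v A ⊆ Γ.side i) (hvA : v ∉ A) (hs : Γ.IsSwitch s (insert v A))
    (ht : Γ.IsSwitch t {v}) (hts : t v = s v) : Γ.IsSwitch (t⁻¹ * s) A := by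
  rw [Γ.isSwitch_iff_of_subset_side hA] at hs
  rw [Γ.isSwitch_iff_of_subset_side (Set.singleton_subset_iff.2 (hA (Set.mem_insert v A)))] at ht
  rw [Γ.isSwitch_iff_of_subset_side ((Set.subset_insert v A).trans hA)]
  have hu : t⁻¹ * s ∈ Γ.symLR := mul_mem (inv_mem ht.1) hs.1
  refine ⟨hu, fun a ha b hb => ?_⟩
  have hue : (t⁻¹ * s) (i.endpoint a b) = v ↔ i.endpoint a b = v := by
    rw [Perm.mul_apply, Perm.inv_eq_iff_eq, hts, s.injective.eq_iff]
  have key := hs.2 a ha b hb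
  rw [← mul_inv_cancel_left t s, keepsType_mul,
    ht.2 _ ((hu.1 a).2 ha) _ ((hu.2 b).2 hb), BSide.endpoint_apply, Set.mem_singleton_iff, hue,
    Set.mem_insert_iff] at key
  by_cases he : i.endpoint a b = v
  · simp only [he, hvA] at key ⊢
    tauto
  · tauto

theorem IsRandom.mem_switchGroup_of_isSwitch (hΓ : Γ.IsRandom) {i : BSide} (A : Finset V)
    (hA : ↑A ⊆ Γ.side i) {s : Perm V} (hs : Γ.IsSwitch s ↑A) : s ∈ Γ.switchGroup {i} := by
  classical
  induction A using Finset.induction_on generalizing s with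
  | empty =>
    rw [Finset.coe_empty, Γ.isSwitch_iff_of_subset_side (i := i) (Set.empty_subset _)] at hs
    exact Γ.autGroup_le_switchGroup _
      (mem_autGroup_of_keepsType hs.1 fun a ha b hb => (hs.2 a ha b hb).2 (Set.notMem_empty _))
  | insert v A hvA ih =>
    rw [Finset.coe_insert, Set.insert_subset_iff] at hA
    rw [Finset.coe_insert] at hs
    obtain ⟨t, ht, htv⟩ := hΓ.exists_isSwitch_extending {v} {v} hs.1
      (by simpa using isSwitchOn_singleton s v {v})
    rw [Finset.coe_singleton] at ht
    have hu := isSwitch_inv_mul (Set.insert_subset hA.1 hA.2) hvA hs ht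
      (htv v (Finset.mem_singleton_self v))
    rw [← mul_inv_cancel_left t s]
    exact mul_mem (mem_switchGroup_of_isSwitch_singleton hA.1 ht) (ih hA.2 hu)

theorem IsRandom.mem_switchGroup_of_isSwitch_left (hΓ : Γ.IsRandom) {ρ : Perm V}
    (hρ : Γ.IsSwitch ρ Γ.left) (i : BSide) : ρ ∈ Γ.switchGroup {i} := by
  classical
  refine isClosedSubgroup_closedClosure _ ρ fun F => ?_
  have hA : ↑(F.filter (· ∈ Γ.side i)) ⊆ Γ.side i := fun x hx => (Finset.mem_filter.1 hx).2
  replace hρ := (Γ.isSwitch_iff_of_subset_side (i := .l) (subset_refl Γ.left)).1 hρ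
  have hρF : Γ.IsSwitchOn ρ ↑F ↑(F.filter (· ∈ Γ.side i)) := by
    rintro a ⟨haF, ha⟩ b ⟨hbF, hb⟩
    have hK : ¬ Γ.KeepsType ρ a b := fun h => (hρ.2 a ha b hb).1 h ha
    have hF : i.endpoint a b ∈ F := by cases i <;> assumption
    rw [ne_eq, Γ.ncard_cross_pair_inter_eq_one_iff hA ha hb, Finset.mem_coe, Finset.mem_filter]
    exact iff_of_false hK (not_not_intro ⟨hF, Γ.endpoint_mem_side i ha hb⟩)
  obtain ⟨s, hs, hsF⟩ := hΓ.exists_isSwitch_extending _ F hρ.1 hρF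
  exact ⟨s, hΓ.mem_switchGroup_of_isSwitch _ hA hs, hsF⟩

end Switches

section SideLocal

variable (Γ : BipartiteGraph V)

/-- Side-preserving permutations for which keeping the cross-type of `(a, b)` depends only on
the endpoint of `(a, b)` on side `i`. For `i = l` these are the permutations preserving the
parity of the number of `P₁`-edges on every `(1 × 2)`-subgraph. -/
def sideLocalGroup (i : BSide) : Subgroup (Perm V) where
  carrier := {g | g ∈ Γ.symLR ∧ ∀ a ∈ Γ.left, ∀ b ∈ Γ.right, ∀ a' ∈ Γ.left, ∀ b' ∈ Γ.right,
    i.endpoint a b = i.endpoint a' b' → (Γ.KeepsType g a b ↔ Γ.KeepsType g a' b')}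
  one_mem' := ⟨Γ.symLR.one_mem, fun _ _ _ _ _ _ _ _ _ => iff_of_true Iff.rfl Iff.rfl⟩
  mul_mem' := by
    rintro g h ⟨hg, hgK⟩ ⟨hh, hhK⟩
    refine ⟨mul_mem hg hh, fun a ha b hb a' ha' b' hb' he => ?_⟩
    rw [keepsType_mul, keepsType_mul, hhK a ha b hb a' ha' b' hb' he,
      hgK _ ((hh.1 a).2 ha) _ ((hh.2 b).2 hb) _ ((hh.1 a').2 ha') _ ((hh.2 b').2 hb')
        (by rw [BSide.endpoint_apply, BSide.endpoint_apply, he])]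
  inv_mem' := by
    rintro g ⟨hg, hgK⟩
    have hg' := inv_mem hg
    refine ⟨hg', fun a ha b hb a' ha' b' hb' he => ?_⟩
    rw [keepsType_inv, keepsType_inv]
    exact hgK _ ((hg'.1 a).2 ha) _ ((hg'.2 b).2 hb) _ ((hg'.1 a').2 ha') _ ((hg'.2 b').2 hb')
      (by rw [BSide.endpoint_apply, BSide.endpoint_apply, he])

theorem isClosedSubgroup_sideLocalGroup (i : BSide) : IsClosedSubgroup (Γ.sideLocalGroup i) := by
  classical
  intro g hg
  have hsym : g ∈ Γ.symLR := by
    refine ⟨fun v => ?_, fun v => ?_⟩ <;> obtain ⟨h, hh, hv⟩ := hg {v} <;>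
      rw [← hv v (Finset.mem_singleton_self v)]
    exacts [hh.1.1 v, hh.1.2 v]
  refine ⟨hsym, fun a ha b hb a' ha' b' hb' he => ?_⟩
  obtain ⟨h, hh, hF⟩ := hg {a, b, a', b'}
  rw [← keepsType_congr (hF a (by simp)) (hF b (by simp)),
    ← keepsType_congr (hF a' (by simp)) (hF b' (by simp))]
  exact hh.2 a ha b hb a' ha' b' hb' he

theorem switchGroup_le_sideLocalGroup (i : BSide) : Γ.switchGroup {i} ≤ Γ.sideLocalGroup i := by
  refine closedClosure_le (Γ.isClosedSubgroup_sideLocalGroup i) (Set.union_subset ?_ ?_)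
  · rintro g ⟨hg, hadj⟩
    exact ⟨hg, fun a _ b _ a' _ b' _ _ => iff_of_true (hadj a b) (hadj a' b')⟩
  · rintro g ⟨j, hj, v, hv, hg⟩
    rw [Set.mem_singleton_iff] at hj
    subst hj
    rw [Γ.isSwitch_iff_of_subset_side (Set.singleton_subset_iff.2 hv)] at hg
    exact ⟨hg.1, fun a ha b hb a' ha' b' hb' he => by rw [hg.2 a ha b hb, hg.2 a' ha' b' hb', he]⟩

theorem inAutStar_of_mem_sideLocalGroup {g : Perm V} (hl : g ∈ Γ.sideLocalGroup .l)
    (hr : g ∈ Γ.sideLocalGroup .r) : Γ.InAutStar g := by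
  obtain ⟨a₀, ha₀⟩ := Γ.left_nonempty
  obtain ⟨b₀, hb₀⟩ := Γ.right_nonempty
  have hK (a) (ha : a ∈ Γ.left) (b) (hb : b ∈ Γ.right) :
      Γ.KeepsType g a b ↔ Γ.KeepsType g a₀ b₀ :=
    (hl.2 a ha b hb a ha b₀ hb₀ rfl).trans (hr.2 a ha b₀ hb₀ a₀ ha₀ b₀ hb₀ rfl)
  refine ⟨hl.1, ?_⟩
  by_cases h₀ : Γ.KeepsType g a₀ b₀
  · exact .inl fun a ha b hb => (hK a ha b hb).2 h₀
  · refine .inr fun a ha b hb => ?_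
    have := mt (hK a ha b hb).1 h₀
    unfold KeepsType at this
    tauto

end SideLocal

end BipartiteGraph

/-- `Aut(Γ)* = S_{l}(Γ) ∩ S_{r}(Γ)`; moreover any switch `ρ` with respect to
the whole side `R_l` belongs to both `S_{l}(Γ)` and `S_{r}(Γ)`. -/
theorem autStar_eq_inter_switchGroups {V : Type*} (Γ : BipartiteGraph V)
    (hΓ : Γ.IsRandom) :
    ({g : Equiv.Perm V | Γ.InAutStar g} =
        (Γ.switchGroup {BSide.l} : Set (Equiv.Perm V)) ∩
          (Γ.switchGroup {BSide.r} : Set (Equiv.Perm V))) ∧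
      ∀ ρ : Equiv.Perm V, Γ.IsSwitch ρ Γ.left →
        ρ ∈ Γ.switchGroup {BSide.l} ∧ ρ ∈ Γ.switchGroup {BSide.r} := by
  have hρ (ρ : Equiv.Perm V) (h : Γ.IsSwitch ρ Γ.left) :
      ρ ∈ Γ.switchGroup {BSide.l} ∧ ρ ∈ Γ.switchGroup {BSide.r} :=
    ⟨hΓ.mem_switchGroup_of_isSwitch_left h .l, hΓ.mem_switchGroup_of_isSwitch_left h .r⟩
  refine ⟨Set.ext fun g => ⟨fun ⟨hg, hK⟩ => ?_, fun ⟨hl, hr⟩ => ?_⟩, hρ⟩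
  · rcases hK with hK | hK
    · have hg' := Γ.mem_autGroup_of_keepsType hg hK
      exact ⟨Γ.autGroup_le_switchGroup _ hg', Γ.autGroup_le_switchGroup _ hg'⟩
    · refine hρ g ((Γ.isSwitch_iff_of_subset_side (i := .l) (subset_refl _)).2
        ⟨hg, fun a ha b hb => iff_of_false ?_ (not_not_intro ha)⟩)
      have := hK a ha b hb
      unfold BipartiteGraph.KeepsType
      tauto
  · exact Γ.inAutStar_of_mem_sideLocalGroup (Γ.switchGroup_le_sideLocalGroup .l hl)
      (Γ.switchGroup_le_sideLocalGroup .r hr)
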